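/- Let m ≥ 1 and let η_1, …, η_m : ℤ → ℝ be sequences such that for every j with 1 ≤ j ≤ m the Δ-Wronskian W_j^Δ(η_1,…,η_j)(n) is nonzero for all n ∈ ℤ. Define T_0 = id and, inductively, φ_j := T_{j−1}(η_j) and T_j := T_d(φ_j)∘T_{j−1}. Then the m-step transformed eigenfunction satisfies φ_m(n) = W_m^Δ(η_1,…,η_m)(n) / W_{m−1}^Δ(η_1,…,η_{m−1})(n) for all n (with W_0^Δ := 1), and consequently the m-step transformed adjoint eigenfunction r^{(m)} := Λ(φ_m⁻¹) satisfies r^{(m)}(n) = W_{m−1}^Δ(η_1,…,η_{m−1})(n+1) / W_m^Δ(η_1,…,η_m)(n+1) for all n ∈ ℤ. -/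
import Mathlib


/-- Difference operator: `(Δ f) n = f (n+1) - f n`. -/
def deltaOp (f : ℤ → ℝ) : ℤ → ℝ := fun n => f (n + 1) - f n

/-- Difference-type gauge transformation operator `T_d(q) = Λ(q)∘Δ∘q⁻¹`:
`(T_d(q)f)(n) = q(n+1)·(Δ(f/q))(n)`. -/
noncomputable def Td (q f : ℤ → ℝ) : ℤ → ℝ := fun n => q (n + 1) * deltaOp (fun m => f m / q m) n

/-- Δ-Wronskian `W_k^Δ(f_1,…,f_k)(n) = det[(Δ^{i−1} f_j)(n)]_{1≤i,j≤k}`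
(here `i j : Fin k` are 0-based, so rows are `Δ^i` and columns the functions). -/
noncomputable def Wr {k : ℕ} (η : Fin k → ℤ → ℝ) (n : ℤ) : ℝ :=
  (Matrix.of fun i j : Fin k => (deltaOp^[(i : ℕ)] (η j)) n).det

/-- Iterated gauge transformation: `T_0 = id` and `T_{j+1} = T_d(T_j(η_{j+1}))∘T_j`,
where `η 0, η 1, …` are the generating sequences `η_1, η_2, …` (0-based indexing). -/
noncomputable def Titer (η : ℕ → ℤ → ℝ) : ℕ → (ℤ → ℝ) → (ℤ → ℝ)
  | 0 => id
  | j + 1 => Td (Titer η j (η j)) ∘ Titer η j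

lemma deltaOp_eq_fwdDiff : deltaOp = fwdDiff (1 : ℤ) := rfl
noncomputable def Cas (k : ℕ) (g : Fin k → ℤ → ℝ) (n : ℤ) : ℝ :=
  (Matrix.of fun l i : Fin k => g i (n + ((l : ℕ) : ℤ))).det
lemma deltaOp_iter (g : ℤ → ℝ) (i : ℕ) (n : ℤ) :
    deltaOp^[i] g n = ∑ l ∈ Finset.range (i + 1),
      ((-1 : ℝ) ^ (i - l) * (i.choose l)) * g (n + l) := by
  rw [deltaOp_eq_fwdDiff, fwdDiff_iter_eq_sum_shift]
  refine Finset.sum_congr rfl fun l _ => ?_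
  rw [zsmul_eq_mul]; push_cast; ring_nf

lemma Wr_eq_Cas {k : ℕ} (g : Fin k → ℤ → ℝ) (n : ℤ) : Wr g n = Cas k g n := by
  classical
  set L : Matrix (Fin k) (Fin k) ℝ :=
    Matrix.of fun i l : Fin k =>
      if (l : ℕ) ≤ (i : ℕ) then (-1 : ℝ) ^ ((i : ℕ) - (l : ℕ)) * ((i : ℕ).choose l) else 0
    with hL
  have hmul : (Matrix.of fun i j : Fin k => (deltaOp^[(i : ℕ)] (g j)) n) =
      L * (Matrix.of fun l i : Fin k => g i (n + ((l : ℕ) : ℤ))) := by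
    ext i j
    rw [Matrix.mul_apply]
    simp only [Matrix.of_apply, hL]
    rw [deltaOp_iter]
    rw [Fin.sum_univ_eq_sum_range
      (fun l => (if l ≤ (i : ℕ) then (-1 : ℝ) ^ ((i : ℕ) - l) * ((i : ℕ).choose l) else 0)
        * g j (n + (l : ℤ)))]
    rw [← Finset.sum_subset (Finset.range_subset_range.mpr i.isLt)
      (fun l _ hl => by
        rw [if_neg (by simpa using fun h : l ≤ (i:ℕ) => hl (Finset.mem_range.mpr (Nat.lt_succ_of_le h))), zero_mul])]
    refine Finset.sum_congr rfl fun l hl => ?_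
    rw [if_pos (Nat.lt_succ_iff.mp (Finset.mem_range.mp hl))]
  have hdetL : L.det = 1 := by
    rw [Matrix.det_of_lowerTriangular L (fun i j hij => by
      simp only [hL, Matrix.of_apply]
      rw [if_neg (by exact fun h => absurd h (not_le.mpr hij))])]
    simp [hL]
  rw [Wr, hmul, Matrix.det_mul, hdetL, one_mul, Cas]

/-- cofactor coefficients of the Casoratian wrt the last column -/
noncomputable def cf (k : ℕ) (g : Fin k → ℤ → ℝ) (n : ℤ) (l : ℕ) : ℝ :=
  if h : l < k + 1 then
    (-1 : ℝ) ^ (l + k) *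
      (Matrix.of fun r c : Fin k =>
        g c (n + ((((⟨l, h⟩ : Fin (k + 1)).succAbove r : Fin (k + 1)) : ℕ) : ℤ))).det
  else 0

lemma cf_zero_of_ge {k : ℕ} (g : Fin k → ℤ → ℝ) (n : ℤ) {l : ℕ} (hl : k + 1 ≤ l) :
    cf k g n l = 0 := dif_neg (by omega)

lemma cf_top {k : ℕ} (g : Fin k → ℤ → ℝ) (n : ℤ) : cf k g n k = Cas k g n := by
  rw [cf, dif_pos (Nat.lt_succ_self k)]
  have h1 : (⟨k, Nat.lt_succ_self k⟩ : Fin (k + 1)) = Fin.last k := rfl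
  have h2 : (-1 : ℝ) ^ (k + k) = 1 := by
    rw [← two_mul, pow_mul]; norm_num
  rw [h1, h2, one_mul, Cas]
  congr 1
  ext r c
  simp [Fin.succAbove_last]

lemma cas_expand {k : ℕ} (g : Fin k → ℤ → ℝ) (f : ℤ → ℝ) (n : ℤ) :
    Cas (k + 1) (Fin.snoc g f) n = ∑ l ∈ Finset.range (k + 1), cf k g n l * f (n + l) := by
  rw [Cas, Matrix.det_succ_column _ (Fin.last k),
    ← Fin.sum_univ_eq_sum_range (fun l => cf k g n l * f (n + l)) (k + 1)]
  refine Finset.sum_congr rfl fun i _ => ?_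
  rw [cf, dif_pos i.isLt]
  have h1 : (⟨(i : ℕ), i.isLt⟩ : Fin (k + 1)) = i := Fin.eta i i.isLt
  rw [h1]
  have h2 : (Matrix.of fun l j : Fin (k+1) =>
      (Fin.snoc g f : Fin (k+1) → ℤ → ℝ) j (n + ((l : ℕ) : ℤ))).submatrix
        i.succAbove (Fin.last k).succAbove =
      Matrix.of fun r c : Fin k => g c (n + (((i.succAbove r : Fin (k+1)) : ℕ) : ℤ)) := by
    ext r c
    simp [Fin.succAbove_last]
  rw [h2]
  have h3 : (Matrix.of fun l j : Fin (k+1) =>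
      (Fin.snoc g f : Fin (k+1) → ℤ → ℝ) j (n + ((l : ℕ) : ℤ))) i (Fin.last k)
      = f (n + (i : ℕ)) := by simp
  rw [h3]
  simp only [Fin.val_last]
  ring

lemma cas_snoc_self {k : ℕ} (g : Fin k → ℤ → ℝ) (i : Fin k) (n : ℤ) :
    Cas (k + 1) (Fin.snoc g (g i)) n = 0 := by
  rw [Cas]
  refine Matrix.det_zero_of_column_eq (Fin.ne_last_of_lt (Fin.castSucc_lt_last i))
    (fun r => ?_)
  simp

lemma cas_zero (n : ℤ) (g : Fin 0 → ℤ → ℝ) : Cas 0 g n = 1 := Matrix.det_fin_zero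

lemma cas_one (f : ℤ → ℝ) (n : ℤ) (g : Fin 0 → ℤ → ℝ) :
    Cas 1 (Fin.snoc g f) n = f n := by
  rw [Cas, Matrix.det_fin_one]
  simp [Fin.snoc]



lemma snoc_eta (η : ℕ → ℤ → ℝ) (j : ℕ) :
    (Fin.snoc (fun i : Fin j => η i) (η j) : Fin (j + 1) → ℤ → ℝ) =
      fun i : Fin (j + 1) => η i := by
  funext i
  refine Fin.lastCases ?_ (fun i => ?_) i
  · simp
  · simp

lemma key (η : ℕ → ℤ → ℝ) (m : ℕ)
    (hW : ∀ j : ℕ, 1 ≤ j → j ≤ m → ∀ n : ℤ, Cas j (fun i : Fin j => η i) n ≠ 0) :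
    ∀ j, j ≤ m → ∀ f n, Titer η j f n =
      Cas (j + 1) (Fin.snoc (fun i : Fin j => η i) f) n / Cas j (fun i : Fin j => η i) n := by
  intro j
  induction j with
  | zero =>
      intro _ f n
      show f n = _
      rw [cas_one, cas_zero, div_one]
  | succ j ih =>
      intro hle f n
      have ihj := ih (le_trans (Nat.le_succ j) hle)
      set Ej : Fin j → ℤ → ℝ := fun i => η i with hEj
      set Ej1 : Fin (j + 1) → ℤ → ℝ := fun i => η i with hEj1
      have hCj : ∀ n', Cas j Ej n' ≠ 0 := by
        rcases Nat.eq_zero_or_pos j with h | h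
        · subst h; intro n'; rw [cas_zero]; norm_num
        · exact hW j h (le_trans (Nat.le_succ j) hle)
      have hCj1 : ∀ n', Cas (j + 1) Ej1 n' ≠ 0 :=
        hW (j + 1) (Nat.succ_le_succ (Nat.zero_le j)) hle
      have hsnoc : (Fin.snoc Ej (η j) : Fin (j + 1) → ℤ → ℝ) = Ej1 := snoc_eta η j
      have hφ : ∀ n', Titer η j (η j) n' = Cas (j + 1) Ej1 n' / Cas j Ej n' := by
        intro n'; rw [ihj (η j) n', hsnoc]
      have hφne : ∀ n', Titer η j (η j) n' ≠ 0 := fun n' => by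
        rw [hφ n']; exact div_ne_zero (hCj1 n') (hCj n')
      set r : ℝ := Titer η j (η j) (n + 1) / Titer η j (η j) n with hr
      have step1 : Titer η (j + 1) f n = Titer η j f (n + 1) - r * Titer η j f n := by
        have haux : ∀ a b x y : ℝ, a ≠ 0 → b ≠ 0 → a * (x / a - y / b) = x - a / b * y := by
          intro a b x y ha hb; field_simp
        show Td (Titer η j (η j)) (Titer η j f) n = _
        simp only [Td, deltaOp, hr]
        exact haux _ _ _ _ (hφne (n + 1)) (hφne n)
      set c : ℕ → ℝ := fun l =>
        (if l = 0 then 0 else cf j Ej (n + 1) (l - 1) / Cas j Ej (n + 1)) -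
          r * (cf j Ej n l / Cas j Ej n) with hc_def
      set d : ℕ → ℝ := fun l => cf (j + 1) Ej1 n l / Cas (j + 1) Ej1 n with hd_def
      have hc : ∀ g : ℤ → ℝ, (∑ l ∈ Finset.range (j + 2), c l * g (n + l))
          = Titer η j g (n + 1) - r * Titer η j g n := by
        intro g
        have e1 : ∑ l ∈ Finset.range (j + 2),
            (if l = 0 then (0 : ℝ) else cf j Ej (n + 1) (l - 1) / Cas j Ej (n + 1)) * g (n + l)
            = Titer η j g (n + 1) := by
          rw [Finset.sum_range_succ']
          have h0 : (if (0 : ℕ) = 0 then (0 : ℝ) else cf j Ej (n + 1) (0 - 1) / Cas j Ej (n + 1))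
              * g (n + ((0 : ℕ) : ℤ)) = 0 := by simp
          rw [h0, add_zero, ihj g (n + 1), cas_expand Ej g (n + 1), Finset.sum_div]
          refine Finset.sum_congr rfl fun l hl => ?_
          rw [if_neg (Nat.succ_ne_zero l), Nat.add_sub_cancel]
          have harg : n + ((l + 1 : ℕ) : ℤ) = n + 1 + (l : ℤ) := by push_cast; ring
          rw [harg]
          ring
        have e2 : ∑ l ∈ Finset.range (j + 2), (r * (cf j Ej n l / Cas j Ej n)) * g (n + l)
            = r * Titer η j g n := by
          rw [Finset.sum_range_succ, cf_zero_of_ge Ej n (le_refl (j + 1)),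
            ihj g n, cas_expand Ej g n, Finset.sum_div, Finset.mul_sum]
          simp only [zero_div, mul_zero, zero_mul, add_zero]
          refine Finset.sum_congr rfl fun l hl => ?_
          ring
        calc (∑ l ∈ Finset.range (j + 2), c l * g (n + l))
            = ∑ l ∈ Finset.range (j + 2),
                ((if l = 0 then (0 : ℝ) else cf j Ej (n + 1) (l - 1) / Cas j Ej (n + 1))
                    * g (n + l)
                  - (r * (cf j Ej n l / Cas j Ej n)) * g (n + l)) := by
              refine Finset.sum_congr rfl fun l hl => ?_
              simp only [hc_def]
              ring
          _ = Titer η j g (n + 1) - r * Titer η j g n := by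
              rw [Finset.sum_sub_distrib, e1, e2]
      have hd : ∀ g : ℤ → ℝ, (∑ l ∈ Finset.range (j + 2), d l * g (n + l))
          = Cas (j + 2) (Fin.snoc Ej1 g) n / Cas (j + 1) Ej1 n := by
        intro g
        rw [cas_expand Ej1 g n, Finset.sum_div]
        refine Finset.sum_congr rfl fun l hl => ?_
        simp only [hd_def]
        ring
      have hctop : c (j + 1) = 1 := by
        simp only [hc_def]
        rw [if_neg (Nat.succ_ne_zero j), Nat.add_sub_cancel, cf_top, div_self (hCj (n + 1)),
          cf_zero_of_ge Ej n le_rfl, zero_div, mul_zero, sub_zero]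
      have hdtop : d (j + 1) = 1 := by
        simp only [hd_def]
        rw [cf_top, div_self (hCj1 n)]
      have hann : ∀ i : Fin (j + 1),
          ∑ l ∈ Finset.range (j + 2), (c l - d l) * η i (n + l) = 0 := by
        intro i
        have h1 := hc (η i)
        have h2 := hd (η i)
        have hsplit : ∑ l ∈ Finset.range (j + 2), (c l - d l) * η i (n + l)
            = (∑ l ∈ Finset.range (j + 2), c l * η i (n + l))
              - ∑ l ∈ Finset.range (j + 2), d l * η i (n + l) := by
          rw [← Finset.sum_sub_distrib]
          refine Finset.sum_congr rfl fun l hl => ?_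
          ring
        rw [hsplit, h1, h2]
        have hz2 : Cas (j + 2) (Fin.snoc Ej1 (η i)) n = 0 := cas_snoc_self Ej1 i n
        rw [hz2, zero_div, sub_zero]
        rcases Nat.lt_succ_iff_lt_or_eq.mp i.isLt with hij | hij
        · have hz : ∀ n', Titer η j (η (i : ℕ)) n' = 0 := by
            intro n'
            rw [ihj]
            have hcol : (Fin.snoc Ej (η (i : ℕ)) : Fin (j + 1) → ℤ → ℝ)
                = Fin.snoc Ej (Ej ⟨(i : ℕ), hij⟩) := rfl
            rw [hcol, cas_snoc_self, zero_div]
          rw [hz, hz, mul_zero, sub_zero]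
        · have hη : η (i : ℕ) = η j := by rw [hij]
          rw [hη, hr, div_mul_cancel₀ _ (hφne n), sub_self]
      have hsub : ∀ l : Fin (j + 1), c (l : ℕ) - d (l : ℕ) = 0 := by
        have hdet : (Matrix.of fun i l : Fin (j + 1) => η i (n + ((l : ℕ) : ℤ))).det ≠ 0 := by
          have htr : (Matrix.of fun i l : Fin (j + 1) => η i (n + ((l : ℕ) : ℤ)))
              = (Matrix.of fun l i : Fin (j + 1) => Ej1 i (n + ((l : ℕ) : ℤ))).transpose := rfl
          rw [htr, Matrix.det_transpose]
          exact hCj1 n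
        have hmv : (Matrix.of fun i l : Fin (j + 1) => η i (n + ((l : ℕ) : ℤ))).mulVec
            (fun l : Fin (j + 1) => c (l : ℕ) - d (l : ℕ)) = 0 := by
          funext i
          have hsum : ∑ l ∈ Finset.range (j + 1), (c l - d l) * η i (n + l) = 0 := by
            have h2' := hann i
            rw [Finset.sum_range_succ] at h2'
            have htop : c (j + 1) - d (j + 1) = 0 := by rw [hctop, hdtop, sub_self]
            rw [htop, zero_mul, add_zero] at h2'
            exact h2'
          show ∑ l : Fin (j + 1), (Matrix.of fun i l : Fin (j + 1) => η i (n + ((l : ℕ) : ℤ))) i l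
              * (c (l : ℕ) - d (l : ℕ)) = 0
          simp only [Matrix.of_apply]
          rw [Fin.sum_univ_eq_sum_range
            (fun l => η i (n + (l : ℤ)) * (c l - d l)) (j + 1)]
          rw [← hsum]
          refine Finset.sum_congr rfl fun l hl => ?_
          ring
        have := Matrix.eq_zero_of_mulVec_eq_zero hdet hmv
        intro l
        exact congrFun this l
      have ceqd : ∀ l < j + 2, c l = d l := by
        intro l hl
        rcases Nat.lt_succ_iff_lt_or_eq.mp hl with hl' | hl'
        · exact sub_eq_zero.mp (hsub ⟨l, hl'⟩)
        · subst hl'; rw [hctop, hdtop]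
      rw [step1, ← hc f, ← hd f]
      refine Finset.sum_congr rfl fun l hl => ?_
      rw [ceqd l (Finset.mem_range.mp hl)]


/-- The `m`-step transformed eigenfunction `φ_m = T_{m−1}(η_m)` satisfies
`φ_m(n) = W_m^Δ(η_1,…,η_m)(n) / W_{m−1}^Δ(η_1,…,η_{m−1})(n)` (with `W_0^Δ = 1`),
and the transformed adjoint eigenfunction `r^{(m)} = Λ(φ_m⁻¹)` satisfies
`r^{(m)}(n) = W_{m−1}^Δ(η_1,…,η_{m−1})(n+1) / W_m^Δ(η_1,…,η_m)(n+1)`. -/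
theorem stmt11 (m : ℕ) (hm : 1 ≤ m) (η : ℕ → ℤ → ℝ)
    (hW : ∀ j : ℕ, 1 ≤ j → j ≤ m → ∀ n : ℤ, Wr (fun i : Fin j => η i) n ≠ 0) :
    (∀ n : ℤ,
      Titer η (m - 1) (η (m - 1)) n =
        Wr (fun i : Fin m => η i) n / Wr (fun i : Fin (m - 1) => η i) n) ∧
    (∀ n : ℤ,
      (Titer η (m - 1) (η (m - 1)) (n + 1))⁻¹ =
        Wr (fun i : Fin (m - 1) => η i) (n + 1) / Wr (fun i : Fin m => η i) (n + 1)) := by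
  obtain ⟨j, rfl⟩ : ∃ j, m = j + 1 := ⟨m - 1, (Nat.succ_pred_eq_of_pos hm).symm⟩
  simp only [Nat.add_sub_cancel]
  have hWc : ∀ j' : ℕ, 1 ≤ j' → j' ≤ j + 1 → ∀ n : ℤ,
      Cas j' (fun i : Fin j' => η i) n ≠ 0 := by
    intro j' h1 h2 n; rw [← Wr_eq_Cas]; exact hW j' h1 h2 n
  have h1 : ∀ n : ℤ, Titer η j (η j) n =
      Wr (fun i : Fin (j + 1) => η i) n / Wr (fun i : Fin j => η i) n := by
    intro n
    rw [key η (j + 1) hWc j (Nat.le_succ j) (η j) n, snoc_eta, Wr_eq_Cas, Wr_eq_Cas]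
  exact ⟨h1, fun n => by rw [h1 (n + 1)]; exact inv_div _ _⟩
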